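/- arXiv:1207.4552 — 2 statements merged into one kernel-verified Lean document; each statement's English description precedes it below -/
import Mathlib

section
/- Let 0 < ε ≤ r, A ∈ ℝ^{n×n}, B ∈ ℝ^{n×m}, k ∈ ℝ^{m×n}, let d : [0,∞) → [−1,1] be measurable, and let (x, u) be a solution of the closed-loop system. Define the predictor state p(t) := e^{Ar} x(t) + ∫_t^{t+r} e^{A(t+r−s)} B u(s−r) ds for t ≥ 0. Then for all t ≥ r the state admits the inverse representation x(t) = e^{−Ar} p(t) − ∫_t^{t+r} e^{A(t−s)} B k p(s−r) ds. -/
/-!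
The feedback law reads `u τ = k p τ` for `τ ≥ 0`, so for `t ≥ r` the delayed input `u (s - r)`,
`s ∈ [t, t + r]`, in the predictor integral equals `k p (s - r)`. Applying `e^{-Ar}` to the
definition of `p t`, and moving it inside the integral (legitimate without any integrability
of `u` because `e^{-Ar}` is invertible), turns `e^{A(t + r - s)}` into `e^{A(t - s)}`.
-/

open MeasureTheory

/-- Matrix-vector multiplication between Euclidean spaces. -/
noncomputable def mv {n m : ℕ} (A : Matrix (Fin n) (Fin m) ℝ)
    (x : EuclideanSpace ℝ (Fin m)) : EuclideanSpace ℝ (Fin n) :=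
  Matrix.toEuclideanLin A x

/-- `mexp A t = exp (t A)`, the matrix exponential. -/
noncomputable def mexp {n : ℕ} (A : Matrix (Fin n) (Fin n) ℝ) (t : ℝ) :
    Matrix (Fin n) (Fin n) ℝ :=
  NormedSpace.exp (t • A)

theorem ContinuousLinearEquiv.intervalIntegral_comp_comm {𝕜 E F : Type*} [RCLike 𝕜]
    [NormedAddCommGroup E] [NormedSpace ℝ E] [NormedSpace 𝕜 E]
    [NormedAddCommGroup F] [NormedSpace ℝ F] [NormedSpace 𝕜 F]
    (L : E ≃L[𝕜] F) (f : ℝ → E) (a b : ℝ) :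
    ∫ x in a..b, L (f x) = L (∫ x in a..b, f x) := by
  simp_rw [intervalIntegral, L.integral_comp_comm, L.map_sub]

section MatrixAction

variable {n m l : ℕ}

theorem mv_add (M : Matrix (Fin n) (Fin m) ℝ) (v w : EuclideanSpace ℝ (Fin m)) :
    mv M (v + w) = mv M v + mv M w :=
  map_add (Matrix.toEuclideanLin M) v w

theorem mv_mv (M : Matrix (Fin n) (Fin m) ℝ) (N : Matrix (Fin m) (Fin l) ℝ)
    (v : EuclideanSpace ℝ (Fin l)) : mv M (mv N v) = mv (M * N) v := by
  simp only [mv, Matrix.toLpLin_apply, Matrix.mulVec_mulVec]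

theorem mv_one (v : EuclideanSpace ℝ (Fin n)) : mv (1 : Matrix (Fin n) (Fin n) ℝ) v = v := by
  simp only [mv, Matrix.toLpLin_apply, Matrix.one_mulVec, WithLp.toLp_ofLp]

theorem mexp_zero (A : Matrix (Fin n) (Fin n) ℝ) : mexp A 0 = 1 := by
  simp [mexp]

theorem mexp_add (A : Matrix (Fin n) (Fin n) ℝ) (a b : ℝ) :
    mexp A (a + b) = mexp A a * mexp A b := by
  rw [mexp, add_smul]
  exact Matrix.exp_add_of_commute _ _ (((Commute.refl A).smul_left a).smul_right b)

theorem mv_mexp_mv_mexp (A : Matrix (Fin n) (Fin n) ℝ) (a b : ℝ) (v : EuclideanSpace ℝ (Fin n)) :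
    mv (mexp A a) (mv (mexp A b) v) = mv (mexp A (a + b)) v := by
  rw [mv_mv, mexp_add]

theorem mv_mexp_neg_mv_mexp (A : Matrix (Fin n) (Fin n) ℝ) (t : ℝ) (v : EuclideanSpace ℝ (Fin n)) :
    mv (mexp A (-t)) (mv (mexp A t) v) = v := by
  rw [mv_mexp_mv_mexp, neg_add_cancel, mexp_zero, mv_one]

noncomputable def mexpEquiv (A : Matrix (Fin n) (Fin n) ℝ) (t : ℝ) :
    EuclideanSpace ℝ (Fin n) ≃L[ℝ] EuclideanSpace ℝ (Fin n) :=
  LinearEquiv.toContinuousLinearEquiv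
    { Matrix.toEuclideanLin (mexp A t) with
      invFun := mv (mexp A (-t))
      left_inv := mv_mexp_neg_mv_mexp A t
      right_inv v := by
        have h := mv_mexp_neg_mv_mexp A (-t) v
        rwa [neg_neg] at h }

theorem mv_mexp_intervalIntegral (A : Matrix (Fin n) (Fin n) ℝ) (t a b : ℝ)
    (f : ℝ → EuclideanSpace ℝ (Fin n)) :
    mv (mexp A t) (∫ s in a..b, f s) = ∫ s in a..b, mv (mexp A t) (f s) :=
  ((mexpEquiv A t).intervalIntegral_comp_comm f a b).symm

end MatrixAction

theorem mv_mexp_neg_predictor {n m : ℕ} (A : Matrix (Fin n) (Fin n) ℝ)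
    (B : Matrix (Fin n) (Fin m) ℝ) (r t : ℝ) (x : EuclideanSpace ℝ (Fin n))
    (u : ℝ → EuclideanSpace ℝ (Fin m)) :
    mv (mexp A (-r)) (mv (mexp A r) x +
        ∫ s in t..(t + r), mv (mexp A (t + r - s)) (mv B (u (s - r)))) =
      x + ∫ s in t..(t + r), mv (mexp A (t - s)) (mv B (u (s - r))) := by
  rw [mv_add, mv_mexp_neg_mv_mexp, mv_mexp_intervalIntegral]
  congr 1
  refine intervalIntegral.integral_congr fun s _ => ?_
  rw [mv_mexp_mv_mexp, show -r + (t + r - s) = t - s by ring]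

theorem stmt_8_general (n m : ℕ) (A : Matrix (Fin n) (Fin n) ℝ)
    (B : Matrix (Fin n) (Fin m) ℝ) (k : Matrix (Fin m) (Fin n) ℝ)
    (r ε : ℝ) (hε : 0 < ε) (hεr : ε ≤ r)
    (x : ℝ → EuclideanSpace ℝ (Fin n)) (u : ℝ → EuclideanSpace ℝ (Fin m))
    (hfb : ∀ t : ℝ, 0 ≤ t →
      u t = mv k (mv (mexp A r) (x t)) +
        mv k (∫ s in t..(t + r), mv (mexp A (t + r - s)) (mv B (u (s - r)))))
    -- the predictor state
    (p : ℝ → EuclideanSpace ℝ (Fin n))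
    (hp : ∀ t : ℝ, 0 ≤ t →
      p t = mv (mexp A r) (x t) +
        ∫ s in t..(t + r), mv (mexp A (t + r - s)) (mv B (u (s - r)))) :
    -- inverse representation of the state
    ∀ t : ℝ, r ≤ t →
      x t = mv (mexp A (-r)) (p t) -
        ∫ s in t..(t + r), mv (mexp A (t - s)) (mv B (mv k (p (s - r)))) := by
  intro t ht
  have hr : 0 ≤ r := hε.le.trans hεr
  have hu : ∀ τ, 0 ≤ τ → u τ = mv k (p τ) := fun τ hτ => by rw [hfb τ hτ, hp τ hτ, mv_add]
  have hdelayed : (∫ s in t..(t + r), mv (mexp A (t - s)) (mv B (mv k (p (s - r))))) =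
      ∫ s in t..(t + r), mv (mexp A (t - s)) (mv B (u (s - r))) := by
    refine intervalIntegral.integral_congr fun s hs => ?_
    rw [Set.uIcc_of_le (by linarith)] at hs
    rw [hu (s - r) (by linarith [hs.1])]
  rw [hp t (by linarith), mv_mexp_neg_predictor, hdelayed, add_sub_cancel_right]

theorem stmt_8 (n m : ℕ) (A : Matrix (Fin n) (Fin n) ℝ)
    (B : Matrix (Fin n) (Fin m) ℝ) (k : Matrix (Fin m) (Fin n) ℝ)
    (r ε : ℝ) (hε : 0 < ε) (hεr : ε ≤ r)
    (d : ℝ → ℝ) (hd : Measurable d) (hd1 : ∀ t, 0 ≤ t → d t ∈ Set.Icc (-1 : ℝ) 1)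
    (x : ℝ → EuclideanSpace ℝ (Fin n)) (u : ℝ → EuclideanSpace ℝ (Fin m))
    (hxc : ContinuousOn x (Set.Ici 0))
    (huc : ContinuousOn u (Set.Ici (-(r + ε))))
    (hplant : ∀ t : ℝ, 0 ≤ t →
      x t = x 0 + ∫ s in (0 : ℝ)..t, (mv A (x s) + mv B (u (s - r - ε * d s))))
    (hfb : ∀ t : ℝ, 0 ≤ t →
      u t = mv k (mv (mexp A r) (x t)) +
        mv k (∫ s in t..(t + r), mv (mexp A (t + r - s)) (mv B (u (s - r)))))
    -- the predictor state
    (p : ℝ → EuclideanSpace ℝ (Fin n))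
    (hp : ∀ t : ℝ, 0 ≤ t →
      p t = mv (mexp A r) (x t) +
        ∫ s in t..(t + r), mv (mexp A (t + r - s)) (mv B (u (s - r)))) :
    -- inverse representation of the state
    ∀ t : ℝ, r ≤ t →
      x t = mv (mexp A (-r)) (p t) -
        ∫ s in t..(t + r), mv (mexp A (t - s)) (mv B (mv k (p (s - r)))) :=
  stmt_8_general n m A B k r ε hε hεr x u hfb p hp
end

section
/- Let τ, r ≥ 0 be constants, A ∈ ℝ^{n×n}, B ∈ ℝ^{n×m}, k ∈ ℝ^{m×n}, and let (x, u) be a solution of the constant-delay closed-loop system. Then for all t ≥ max(r, τ) the identity u(t−τ) = k e^{Ar} x(t−τ) + k x(t) − k e^{Ar} x(t−r) holds. -/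
open MeasureTheory

/-!
Shifting the integration variable by `τ - r` turns the feedback integral at time `t - τ` into
`∫_{t-r}^t e^{A(t-s)} B u(s-τ) ds`. The plant is the linear ODE `ẋ = A x + B u(· - τ)`, so by the
variation of constants formula on `[t - r, t]` this integral equals `x(t) - e^{Ar} x(t - r)`.
-/

open Set NormedSpace

theorem exp_smul_mul_exp_smul {𝔸 : Type*} [NormedRing 𝔸] [NormedAlgebra ℝ 𝔸] [CompleteSpace 𝔸]
    (a : 𝔸) (s t : ℝ) : exp (s • a) * exp (t • a) = exp ((s + t) • a) := by
  let +nondep : NormedAlgebra ℚ 𝔸 := .restrictScalars ℚ ℝ 𝔸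
  rw [add_smul, exp_add_of_commute (((Commute.refl a).smul_left s).smul_right t)]

section VariationOfConstants

variable {E : Type*} [NormedAddCommGroup E] [NormedSpace ℝ E] [CompleteSpace E]

theorem hasDerivAt_of_eq_add_integral {x f : ℝ → E} {a t : ℝ} (hf : ContinuousOn f (Ici a))
    (hx : ∀ s, a ≤ s → x s = x a + ∫ σ in a..s, f σ) (ht : a < t) :
    HasDerivAt x (f t) t := by
  have hint : IntervalIntegrable f volume a t :=
    (hf.mono (uIcc_of_le ht.le ▸ Icc_subset_Ici_self)).intervalIntegrable
  have hmeas : StronglyMeasurableAtFilter f (nhds t) :=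
    (hf.mono (Ioi_subset_Ici le_rfl)).stronglyMeasurableAtFilter isOpen_Ioi t ht
  refine ((intervalIntegral.integral_hasDerivAt_right hint hmeas
    (hf.continuousAt (Ici_mem_nhds ht))).const_add (x a)).congr_of_eventuallyEq ?_
  filter_upwards [Ioi_mem_nhds ht] with s hs using hx s hs.le

theorem hasDerivAt_exp_neg_smul_apply (L : E →L[ℝ] E) {x : ℝ → E} {v : E} {s : ℝ}
    (hx : HasDerivAt x (L (x s) + v) s) :
    HasDerivAt (fun σ => exp ((-σ) • L) (x σ)) (exp ((-s) • L) v) s := by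
  have hexp : HasDerivAt (fun σ : ℝ => exp ((-σ) • L)) (-(L * exp ((-s) • L))) s := by
    have := (hasDerivAt_exp_smul_const' L (-s)).scomp s (hasDerivAt_neg s)
    rwa [neg_one_smul] at this
  have hcomm : exp ((-s) • L) * L = L * exp ((-s) • L) :=
    ((Commute.refl L).smul_left (-s)).exp_left.eq
  convert hexp.clm_apply hx using 1
  rw [map_add, ← mul_apply_eq_comp, hcomm]
  simp

theorem eq_exp_smul_apply_add_integral (L : E →L[ℝ] E) {x g : ℝ → E} {a b : ℝ} (hab : a ≤ b)
    (hx : ContinuousOn x (Icc a b)) (hg : ContinuousOn g (Icc a b))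
    (hderiv : ∀ s ∈ Ioo a b, HasDerivAt x (L (x s) + g s) s) :
    x b = exp ((b - a) • L) (x a) + ∫ s in a..b, exp ((b - s) • L) (g s) := by
  have hexp_cont : Continuous fun s : ℝ => exp ((-s) • L) := by
    let +nondep : NormedAlgebra ℚ (E →L[ℝ] E) := .restrictScalars ℚ ℝ _
    fun_prop
  have hint : IntervalIntegrable (fun s => exp ((-s) • L) (g s)) volume a b :=
    (hexp_cont.continuousOn.clm_apply hg).intervalIntegrable_of_Icc hab
  have hftc := intervalIntegral.integral_eq_sub_of_hasDerivAt_of_le hab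
    (hexp_cont.continuousOn.clm_apply hx)
    (fun s hs => hasDerivAt_exp_neg_smul_apply L (hderiv s hs)) hint
  have hshift (s : ℝ) (v : E) : exp (b • L) (exp ((-s) • L) v) = exp ((b - s) • L) v := by
    rw [sub_eq_add_neg]
    -- not `rw`: the `Algebra ℚ` instances on `E →L[ℝ] E` and on a general `𝔸`
    -- agree only up to unfolding
    exact congrArg (· v) (exp_smul_mul_exp_smul L b (-s))
  have key := congrArg (fun v => exp (b • L) v) hftc
  rw [← ContinuousLinearMap.intervalIntegral_comp_comm _ hint, map_sub] at key
  simp only [hshift, sub_self, zero_smul, exp_zero, one_apply_eq_self] at key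
  rw [key]
  abel

end VariationOfConstants

theorem Matrix.toEuclideanCLM_exp {ι 𝕜 : Type*} [Fintype ι] [DecidableEq ι] [RCLike 𝕜]
    (M : Matrix ι ι 𝕜) : toEuclideanCLM (𝕜 := 𝕜) (exp M) = exp (toEuclideanCLM (𝕜 := 𝕜) M) :=
  open scoped Matrix.Norms.Operator in
  map_exp (toEuclideanCLM (n := ι) (𝕜 := 𝕜)) (LinearMap.continuous_of_finiteDimensional
    (toEuclideanCLM (n := ι) (𝕜 := 𝕜)).toAlgEquiv.toLinearMap) M

theorem mv_mexp {n : ℕ} (A : Matrix (Fin n) (Fin n) ℝ) (t : ℝ) (v : EuclideanSpace ℝ (Fin n)) :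
    mv (mexp A t) v = exp (t • Matrix.toEuclideanCLM (𝕜 := ℝ) A) v := by
  rw [← map_smul, ← Matrix.toEuclideanCLM_exp]
  rfl

theorem continuous_mv {n m : ℕ} (M : Matrix (Fin n) (Fin m) ℝ) : Continuous (mv M) :=
  LinearMap.continuous_of_finiteDimensional (Matrix.toEuclideanLin M)

theorem mv_sub {n m : ℕ} (M : Matrix (Fin n) (Fin m) ℝ) (v w : EuclideanSpace ℝ (Fin m)) :
    mv M (v - w) = mv M v - mv M w :=
  map_sub (Matrix.toEuclideanLin M) v w

theorem stmt_9_general (n m : ℕ) (A : Matrix (Fin n) (Fin n) ℝ)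
    (B : Matrix (Fin n) (Fin m) ℝ) (k : Matrix (Fin m) (Fin n) ℝ)
    (τ r : ℝ) (hr : 0 ≤ r)
    (x : ℝ → EuclideanSpace ℝ (Fin n)) (u : ℝ → EuclideanSpace ℝ (Fin m))
    (hxc : ContinuousOn x (Set.Ici 0))
    (huc : ContinuousOn u (Set.Ici (-max r τ)))
    (hplant : ∀ t : ℝ, 0 ≤ t →
      x t = x 0 + ∫ s in (0 : ℝ)..t, (mv A (x s) + mv B (u (s - τ))))
    (hfb : ∀ t : ℝ, 0 ≤ t →
      u t = mv k (mv (mexp A r) (x t)) +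
        mv k (∫ s in t..(t + r), mv (mexp A (t + r - s)) (mv B (u (s - r))))) :
    ∀ t : ℝ, max r τ ≤ t →
      u (t - τ) = mv k (mv (mexp A r) (x (t - τ))) + mv k (x t) -
        mv k (mv (mexp A r) (x (t - r))) := by
  intro t ht
  set L := Matrix.toEuclideanCLM (𝕜 := ℝ) A
  have htr : 0 ≤ t - r := sub_nonneg.2 ((le_max_left r τ).trans ht)
  have hinput : ContinuousOn (fun s => mv B (u (s - τ))) (Ici 0) :=
    (continuous_mv B).comp_continuousOn (huc.comp (continuous_sub_right τ).continuousOn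
      fun s (hs : 0 ≤ s) => show -max r τ ≤ s - τ by linarith [le_max_right r τ])
  have hderiv (s : ℝ) (hs : 0 < s) : HasDerivAt x (L (x s) + mv B (u (s - τ))) s :=
    hasDerivAt_of_eq_add_integral (((continuous_mv A).comp_continuousOn hxc).add hinput) hplant hs
  have hduhamel := eq_exp_smul_apply_add_integral L (a := t - r) (b := t) (by linarith)
    (hxc.mono fun s hs => htr.trans hs.1) (hinput.mono fun s hs => htr.trans hs.1)
    (fun s hs => hderiv s (htr.trans_lt hs.1))
  rw [sub_sub_cancel, ← mv_mexp] at hduhamel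
  have hshift : ∫ s in (t - τ)..(t - τ + r), mv (mexp A (t - τ + r - s)) (mv B (u (s - r))) =
      ∫ s in (t - r)..t, exp ((t - s) • L) (mv B (u (s - τ))) := by
    have := intervalIntegral.integral_comp_add_right (a := t - τ) (b := t - τ + r)
      (fun s => exp ((t - s) • L) (mv B (u (s - τ)))) (τ - r)
    rw [show t - τ + (τ - r) = t - r by ring, show t - τ + r + (τ - r) = t by ring] at this
    rw [← this]
    congr 1 with s
    rw [mv_mexp, show t - (s + (τ - r)) = t - τ + r - s by ring, show s + (τ - r) - τ = s - r by ring]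
  rw [hfb (t - τ) (by linarith [le_max_right r τ]), hshift, eq_sub_of_add_eq' hduhamel.symm,
    mv_sub, add_sub_assoc]

theorem stmt_9 (n m : ℕ) (A : Matrix (Fin n) (Fin n) ℝ)
    (B : Matrix (Fin n) (Fin m) ℝ) (k : Matrix (Fin m) (Fin n) ℝ)
    (τ r : ℝ) (hτ : 0 ≤ τ) (hr : 0 ≤ r)
    (x : ℝ → EuclideanSpace ℝ (Fin n)) (u : ℝ → EuclideanSpace ℝ (Fin m))
    (hxc : ContinuousOn x (Set.Ici 0))
    (huc : ContinuousOn u (Set.Ici (-max r τ)))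
    (hplant : ∀ t : ℝ, 0 ≤ t →
      x t = x 0 + ∫ s in (0 : ℝ)..t, (mv A (x s) + mv B (u (s - τ))))
    (hfb : ∀ t : ℝ, 0 ≤ t →
      u t = mv k (mv (mexp A r) (x t)) +
        mv k (∫ s in t..(t + r), mv (mexp A (t + r - s)) (mv B (u (s - r))))) :
    ∀ t : ℝ, max r τ ≤ t →
      u (t - τ) = mv k (mv (mexp A r) (x (t - τ))) + mv k (x t) -
        mv k (mv (mexp A r) (x (t - r))) :=
  stmt_9_general n m A B k τ r hr x u hxc huc hplant hfb
end
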